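/- Let G1 = (V1, E1) and G2 = (V2, E2) be well-formed graphs over the same node type such that the sets V2 \ V1, V1 \ V2, E2 \ E1 and E1 \ E2 are finite. Then the application of Δ(G1, G2) is order-independent: for every sequence enumerating each operation of Δ(G1, G2) exactly once, in any order, applying that sequence to G1 yields G2. -/

import Mathlib

/-- A graph over a node type `α`: a set of nodes and a set of edges
(unordered pairs of nodes). -/
structure UpdGraph (α : Type*) where
  V : Set α
  E : Set (Sym2 α)

/-- A graph is well-formed if its edges are pairs of *distinct* nodes and
both endpoints of every edge belong to the node set. -/
def UpdGraph.WellFormed {α : Type*} (G : UpdGraph α) : Prop :=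
  (∀ e ∈ G.E, ¬ e.IsDiag) ∧ ∀ e ∈ G.E, ∀ v ∈ e, v ∈ G.V

/-- Update operations on graphs. -/
inductive Op (α : Type*) where
  | addNode (v : α)
  | remNode (v : α)
  | addEdge (e : Sym2 α)
  | remEdge (e : Sym2 α)

/-- The delta Δ(G1, G2). -/
def delta {α : Type*} (G1 G2 : UpdGraph α) : Set (Op α) :=
  (Op.addNode '' (G2.V \ G1.V)) ∪ (Op.remNode '' (G1.V \ G2.V)) ∪
  (Op.addEdge '' (G2.E \ G1.E)) ∪
  (Op.remEdge '' {e | e ∈ G1.E \ G2.E ∧ ∀ v ∈ e, v ∈ G2.V})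

/-- The result of applying a set `S` of operations to a graph `G` in the order:
first all `remEdge` operations, then all `remNode` operations
(each of which removes the node and its incident edges),
then all `addNode` operations, then all `addEdge` operations. -/
def applyDelta {α : Type*} (S : Set (Op α)) (G : UpdGraph α) : UpdGraph α :=
  ⟨(G.V \ {v | Op.remNode v ∈ S}) ∪ {v | Op.addNode v ∈ S},
   {e ∈ G.E | Op.remEdge e ∉ S ∧ ∀ v ∈ e, Op.remNode v ∉ S} ∪ {e | Op.addEdge e ∈ S}⟩
/-- Applying a sequence of operations to a graph, from left to right. -/
def applySeq {α : Type*} (G : UpdGraph α) (l : List (Op α)) : UpdGraph α :=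
  l.foldl (fun H op =>
    match op with
    | Op.addNode v => ⟨H.V ∪ {v}, H.E⟩
    | Op.remNode v => ⟨H.V \ {v}, {e ∈ H.E | v ∉ e}⟩
    | Op.addEdge e => ⟨H.V, H.E ∪ {e}⟩
    | Op.remEdge e => ⟨H.V, H.E \ {e}⟩) G

/-!
The operations of Δ(G1, G2) never interfere: no node is both added and removed, no edge is both
added and removed, and no added edge is incident to a removed node (added edges lie in V2 because
G2 is well-formed). Hence, for `S ⊆ Δ`, applying one more operation `op` of Δ to
`applyDelta S G1` gives `applyDelta (insert op S) G1`; by induction every enumeration of Δ yields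
`applyDelta Δ G1`, which is G2 because G1 and G2 are well-formed.
-/

attribute [ext] UpdGraph

namespace UpdGraph

variable {α : Type*}

def applyOp (H : UpdGraph α) : Op α → UpdGraph α
  | .addNode v => ⟨H.V ∪ {v}, H.E⟩
  | .remNode v => ⟨H.V \ {v}, {e ∈ H.E | v ∉ e}⟩
  | .addEdge e => ⟨H.V, H.E ∪ {e}⟩
  | .remEdge e => ⟨H.V, H.E \ {e}⟩

theorem applySeq_append_singleton (G : UpdGraph α) (l : List (Op α)) (op : Op α) :
    applySeq G (l ++ [op]) = (applySeq G l).applyOp op := by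
  cases op <;> simp [applySeq, applyOp]

variable {G1 G2 : UpdGraph α}

theorem addNode_mem_delta {v : α} :
    Op.addNode v ∈ delta G1 G2 ↔ v ∈ G2.V ∧ v ∉ G1.V := by
  simp [delta]

theorem remNode_mem_delta {v : α} :
    Op.remNode v ∈ delta G1 G2 ↔ v ∈ G1.V ∧ v ∉ G2.V := by
  simp [delta]

theorem addEdge_mem_delta {e : Sym2 α} :
    Op.addEdge e ∈ delta G1 G2 ↔ e ∈ G2.E ∧ e ∉ G1.E := by
  simp [delta]

theorem remEdge_mem_delta {e : Sym2 α} :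
    Op.remEdge e ∈ delta G1 G2 ↔ (e ∈ G1.E ∧ e ∉ G2.E) ∧ ∀ v ∈ e, v ∈ G2.V := by
  simp [delta]

theorem addNode_notMem_delta_of_remNode_mem {v : α} (hv : Op.remNode v ∈ delta G1 G2) :
    Op.addNode v ∉ delta G1 G2 :=
  fun h => (addNode_mem_delta.mp h).2 (remNode_mem_delta.mp hv).1

theorem addEdge_notMem_delta_of_remEdge_mem {e : Sym2 α} (he : Op.remEdge e ∈ delta G1 G2) :
    Op.addEdge e ∉ delta G1 G2 :=
  fun h => (addEdge_mem_delta.mp h).2 (remEdge_mem_delta.mp he).1.1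

theorem notMem_of_remNode_mem_delta_of_addEdge_mem_delta (h2 : G2.WellFormed) {v : α}
    {e : Sym2 α} (hv : Op.remNode v ∈ delta G1 G2) (he : Op.addEdge e ∈ delta G1 G2) : v ∉ e :=
  fun hve => (remNode_mem_delta.mp hv).2 (h2.2 e (addEdge_mem_delta.mp he).1 v hve)

theorem mem_applyDelta_V {S : Set (Op α)} {G : UpdGraph α} {v : α} :
    v ∈ (applyDelta S G).V ↔ (v ∈ G.V ∧ Op.remNode v ∉ S) ∨ Op.addNode v ∈ S :=
  Iff.rfl

theorem mem_applyDelta_E {S : Set (Op α)} {G : UpdGraph α} {e : Sym2 α} :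
    e ∈ (applyDelta S G).E ↔
      (e ∈ G.E ∧ Op.remEdge e ∉ S ∧ ∀ v ∈ e, Op.remNode v ∉ S) ∨ Op.addEdge e ∈ S :=
  Iff.rfl

theorem applyOp_applyDelta (h2 : G2.WellFormed) {S : Set (Op α)} (hS : S ⊆ delta G1 G2)
    {op : Op α} (hop : op ∈ delta G1 G2) :
    (applyDelta S G1).applyOp op = applyDelta (insert op S) G1 := by
  have hV : ∀ v, Op.remNode v ∈ delta G1 G2 → Op.addNode v ∉ S := fun v hv h =>
    addNode_notMem_delta_of_remNode_mem hv (hS h)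
  have hE : ∀ e, Op.remEdge e ∈ delta G1 G2 → Op.addEdge e ∉ S := fun e he h =>
    addEdge_notMem_delta_of_remEdge_mem he (hS h)
  have hVE : ∀ v e, Op.remNode v ∈ delta G1 G2 → Op.addEdge e ∈ S → v ∉ e := fun v e hv he =>
    notMem_of_remNode_mem_delta_of_addEdge_mem_delta h2 hv (hS he)
  cases op <;> ext x <;>
    simp only [applyOp, mem_applyDelta_V, mem_applyDelta_E, Set.mem_union, Set.mem_sdiff,
      Set.mem_singleton_iff, Set.mem_insert_iff] <;> grind

theorem applySeq_eq_applyDelta (h2 : G2.WellFormed) {l : List (Op α)}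
    (hl : ∀ o ∈ l, o ∈ delta G1 G2) : applySeq G1 l = applyDelta {o | o ∈ l} G1 := by
  induction l using List.reverseRecOn with
  | nil => simp [applySeq, applyDelta]
  | append_singleton l op ih =>
    have hl' : ∀ o ∈ l, o ∈ delta G1 G2 := fun o ho => hl o (by simp [ho])
    rw [applySeq_append_singleton, ih hl',
      applyOp_applyDelta (S := {o | o ∈ l}) h2 hl' (hl op (by simp))]
    congr 1
    ext o
    simp [or_comm]

theorem applyDelta_delta (h1 : G1.WellFormed) (h2 : G2.WellFormed) :
    applyDelta (delta G1 G2) G1 = G2 := by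
  have hV1 := h1.2
  have hV2 := h2.2
  ext x <;>
    simp only [mem_applyDelta_V, mem_applyDelta_E, addNode_mem_delta, remNode_mem_delta,
      addEdge_mem_delta, remEdge_mem_delta] <;> grind

end UpdGraph

theorem delta_order_independent_general {α : Type*} (G1 G2 : UpdGraph α)
    (h1 : G1.WellFormed) (h2 : G2.WellFormed) :
    ∀ l : List (Op α), l.Nodup → (∀ o : Op α, o ∈ l ↔ o ∈ delta G1 G2) →
      applySeq G1 l = G2 := by
  intro l _ hl
  have hS : {o | o ∈ l} = delta G1 G2 := Set.ext hl
  rw [UpdGraph.applySeq_eq_applyDelta h2 fun o => (hl o).mp, hS,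
    UpdGraph.applyDelta_delta h1 h2]

/-- The application of Δ(G1, G2) is order-independent: any sequence enumerating
each operation of Δ(G1, G2) exactly once, in any order, applied to G1 yields G2. -/
theorem delta_order_independent {α : Type*} (G1 G2 : UpdGraph α)
    (h1 : G1.WellFormed) (h2 : G2.WellFormed)
    (hfV₁ : (G2.V \ G1.V).Finite) (hfV₂ : (G1.V \ G2.V).Finite)
    (hfE₁ : (G2.E \ G1.E).Finite) (hfE₂ : (G1.E \ G2.E).Finite) :
    ∀ l : List (Op α), l.Nodup → (∀ o : Op α, o ∈ l ↔ o ∈ delta G1 G2) →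
      applySeq G1 l = G2 :=
  delta_order_independent_general G1 G2 h1 h2
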